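/- Let Φ be an irreducible simply laced root system with highest root ω (relative to a fixed base), and let λ be a dominant weight lying in Λ_0 ∪ Λ_1 ∪ Λ_2 (i.e., λ is a sum of two roots with non-negative inner product). Then λ = ω + ψ for some positive root ψ. -/

import Mathlib

/-!
Write `λ = α + β`. Dominance of `λ` makes `α` and `β` positive, and since `⟪ω, δ⟫ ω - δ` is a
positive root whenever `⟪ω, δ⟫ > 0`, dominance also gives `⟪λ, δ⟫ ≤ ⟪ω, δ⟫ ⟪λ, ω⟫` for such `δ`.
Irreducibility forces `⟪λ, ω⟫ > 0`. Unless `α` or `β` is `ω`, one of them, say `α`, then has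
`⟪ω, α⟫ = 1`; the inequality at `δ = α` gives `⟪ω, β⟫ = 1` and `⟪α, β⟫ = 0`, and
`ψ = α - (ω - β)` is a root pairing positively with `λ`, hence positive.
-/

open scoped RealInnerProductSpace

section SimplyLaced

variable {V : Type*} [NormedAddCommGroup V] [InnerProductSpace ℝ V]

def IsDominant (Φp : Finset V) (μ : V) : Prop := ∀ α ∈ Φp, 0 ≤ ⟪μ, α⟫

lemma real_inner_le_two {a b : V} (ha : ⟪a, a⟫ = 2) (hb : ⟪b, b⟫ = 2) : ⟪a, b⟫ ≤ 2 := by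
  have h := real_inner_self_nonneg (x := a - b)
  rw [real_inner_sub_sub_self, ha, hb] at h
  linarith

lemma eq_of_real_inner_eq_two {a b : V} (ha : ⟪a, a⟫ = 2) (hb : ⟪b, b⟫ = 2)
    (h : ⟪a, b⟫ = 2) : a = b := by
  rw [← sub_eq_zero, ← inner_self_eq_zero (𝕜 := ℝ), real_inner_sub_sub_self, ha, hb, h]
  norm_num

variable {Φ Φp : Finset V}

lemma inner_eq_zero_or_eq_one_of_ne (hlen : ∀ α ∈ Φ, ⟪α, α⟫ = 2)
    (hint : ∀ α ∈ Φ, ∀ β ∈ Φ, ∃ n : ℤ, ⟪α, β⟫ = n) {a b : V} (ha : a ∈ Φ) (hb : b ∈ Φ)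
    (hab : 0 ≤ ⟪a, b⟫) (hne : a ≠ b) : ⟪a, b⟫ = 0 ∨ ⟪a, b⟫ = 1 := by
  have hlt : ⟪a, b⟫ < 2 := (real_inner_le_two (hlen a ha) (hlen b hb)).lt_of_ne
    fun h ↦ hne (eq_of_real_inner_eq_two (hlen a ha) (hlen b hb) h)
  obtain ⟨n, hn⟩ := hint a ha b hb
  rw [hn] at hab hlt ⊢
  have : n = 0 ∨ n = 1 := by
    have : 0 ≤ n := by exact_mod_cast hab
    have : n < 2 := by exact_mod_cast hlt
    omega
  rcases this with rfl | rfl <;> simp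

lemma sub_mem_of_inner_eq_one (hrefl : ∀ α ∈ Φ, ∀ β ∈ Φ, β - ⟪β, α⟫ • α ∈ Φ) {a b : V}
    (ha : a ∈ Φ) (hb : b ∈ Φ) (h : ⟪b, a⟫ = 1) : b - a ∈ Φ := by
  simpa [h] using hrefl a ha b hb

lemma mem_of_isDominant_of_inner_pos (hsplit : ∀ α ∈ Φ, (α ∈ Φp ↔ -α ∉ Φp)) {μ γ : V}
    (hμ : IsDominant Φp μ) (hγ : γ ∈ Φ) (h : 0 < ⟪μ, γ⟫) : γ ∈ Φp := by
  by_contra hn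
  have h' := hμ (-γ) (not_not.mp (mt (hsplit γ hγ).mpr hn))
  rw [inner_neg_right] at h'
  linarith

lemma inner_le_inner_highest_mul (hneg : ∀ α ∈ Φ, -α ∈ Φ)
    (hrefl : ∀ α ∈ Φ, ∀ β ∈ Φ, β - ⟪β, α⟫ • α ∈ Φ) (hsplit : ∀ α ∈ Φ, (α ∈ Φp ↔ -α ∉ Φp))
    {ω μ δ : V} (hω : ω ∈ Φ) (hωω : ⟪ω, ω⟫ = 2) (hωdom : IsDominant Φp ω)
    (hμ : IsDominant Φp μ) (hδ : δ ∈ Φ) (hωδ : 0 < ⟪ω, δ⟫) : ⟪μ, δ⟫ ≤ ⟪ω, δ⟫ * ⟪μ, ω⟫ := by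
  have hroot : ⟪ω, δ⟫ • ω - δ ∈ Φ := by
    simpa [real_inner_comm ω δ] using hneg _ (hrefl ω hω δ hδ)
  have hpos : ⟪ω, δ⟫ • ω - δ ∈ Φp := by
    refine mem_of_isDominant_of_inner_pos hsplit hωdom hroot ?_
    rw [inner_sub_right, real_inner_smul_right, hωω]
    linarith
  have h := hμ _ hpos
  rw [inner_sub_right, real_inner_smul_right] at h
  linarith

open Classical in
noncomputable def linkedRoots (Φ : Finset V) (μ : V) : Finset V :=
  Φ.filter fun y ↦ ∃ a ∈ Φ, ⟪μ, a⟫ ≠ 0 ∧ ⟪a, y⟫ ≠ 0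

lemma mem_linkedRoots {μ y : V} :
    y ∈ linkedRoots Φ μ ↔ y ∈ Φ ∧ ∃ a ∈ Φ, ⟪μ, a⟫ ≠ 0 ∧ ⟪a, y⟫ ≠ 0 := by
  classical
  simp [linkedRoots]

lemma inner_eq_zero_of_mem_linkedRoots (hrefl : ∀ α ∈ Φ, ∀ β ∈ Φ, β - ⟪β, α⟫ • α ∈ Φ)
    {μ x y : V} (hx : x ∈ linkedRoots Φ μ) (hy : y ∈ Φ) (hyS : y ∉ linkedRoots Φ μ) :
    ⟪x, y⟫ = 0 := by
  obtain ⟨hxΦ, a, ha, hμa, hax⟩ := mem_linkedRoots.mp hx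
  have unlinked : ∀ b ∈ Φ, ⟪μ, b⟫ ≠ 0 → ⟪b, y⟫ = 0 := fun b hb hμb ↦ by
    by_contra hby
    exact hyS (mem_linkedRoots.mpr ⟨hy, b, hb, hμb, hby⟩)
  by_contra hxy
  have hμx : ⟪μ, x⟫ = 0 := by
    by_contra hμx
    exact hxy (unlinked x hxΦ hμx)
  -- `s_x a` pairs with `μ` as `a` does, but with `y` as `-⟪a, x⟫ ⟪x, y⟫ ≠ 0`
  have hμa' : ⟪μ, a - ⟪a, x⟫ • x⟫ ≠ 0 := by
    rwa [inner_sub_right, real_inner_smul_right, hμx, mul_zero, sub_zero]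
  have h := unlinked _ (hrefl x hxΦ a ha) hμa'
  rw [inner_sub_left, real_inner_smul_left, unlinked a ha hμa, zero_sub, neg_eq_zero] at h
  exact mul_ne_zero hax hxy h

lemma exists_inner_ne_zero_of_irreducible (hlen : ∀ α ∈ Φ, ⟪α, α⟫ = 2)
    (hrefl : ∀ α ∈ Φ, ∀ β ∈ Φ, β - ⟪β, α⟫ • α ∈ Φ)
    (hirr : ∀ S ⊆ Φ, (∀ a ∈ S, ∀ b ∈ Φ, b ∉ S → ⟪a, b⟫ = 0) → S = ∅ ∨ S = Φ)
    {μ α γ : V} (hα : α ∈ Φ) (hμα : ⟪μ, α⟫ ≠ 0) (hγ : γ ∈ Φ) :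
    ∃ a ∈ Φ, ⟪μ, a⟫ ≠ 0 ∧ ⟪a, γ⟫ ≠ 0 := by
  have hαS : α ∈ linkedRoots Φ μ :=
    mem_linkedRoots.mpr ⟨hα, α, hα, hμα, by rw [hlen α hα]; norm_num⟩
  rcases hirr (linkedRoots Φ μ) (fun y hy ↦ (mem_linkedRoots.mp hy).1)
      (fun x hx y hy hyS ↦ inner_eq_zero_of_mem_linkedRoots hrefl hx hy hyS) with hS | hS
  · simp [hS] at hαS
  · rw [← hS] at hγ
    exact (mem_linkedRoots.mp hγ).2

lemma inner_highest_pos (hlen : ∀ α ∈ Φ, ⟪α, α⟫ = 2) (hneg : ∀ α ∈ Φ, -α ∈ Φ)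
    (hrefl : ∀ α ∈ Φ, ∀ β ∈ Φ, β - ⟪β, α⟫ • α ∈ Φ)
    (hirr : ∀ S ⊆ Φ, (∀ a ∈ S, ∀ b ∈ Φ, b ∉ S → ⟪a, b⟫ = 0) → S = ∅ ∨ S = Φ)
    (hsplit : ∀ α ∈ Φ, (α ∈ Φp ↔ -α ∉ Φp)) {ω μ α : V} (hω : ω ∈ Φ)
    (hωdom : IsDominant Φp ω) (hμ : IsDominant Φp μ) (hα : α ∈ Φ) (hμα : ⟪μ, α⟫ ≠ 0) :
    0 < ⟪μ, ω⟫ := by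
  have hωω := hlen ω hω
  have hωp : ω ∈ Φp := mem_of_isDominant_of_inner_pos hsplit hωdom hω (by rw [hωω]; norm_num)
  refine (hμ ω hωp).lt_of_ne fun hμω ↦ ?_
  obtain ⟨a, ha, hμa, haω⟩ := exists_inner_ne_zero_of_irreducible hlen hrefl hirr hα hμα hω
  obtain ⟨b, hb, hμb, hωb⟩ : ∃ b ∈ Φ, 0 < ⟪μ, b⟫ ∧ ⟪ω, b⟫ ≠ 0 := by
    rw [real_inner_comm] at haω
    rcases hμa.lt_or_gt with h | h
    · exact ⟨-a, hneg a ha, by rw [inner_neg_right]; linarith, by simpa using haω⟩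
    · exact ⟨a, ha, h, haω⟩
  have hωb' : 0 < ⟪ω, b⟫ :=
    (hωdom b (mem_of_isDominant_of_inner_pos hsplit hμ hb hμb)).lt_of_ne' hωb
  have h := inner_le_inner_highest_mul hneg hrefl hsplit hω hωω hωdom hμ hb hωb'
  rw [← hμω, mul_zero] at h
  linarith

lemma add_sub_highest_mem_of_inner_eq_one (hlen : ∀ α ∈ Φ, ⟪α, α⟫ = 2)
    (hneg : ∀ α ∈ Φ, -α ∈ Φ) (hrefl : ∀ α ∈ Φ, ∀ β ∈ Φ, β - ⟪β, α⟫ • α ∈ Φ)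
    (hsplit : ∀ α ∈ Φ, (α ∈ Φp ↔ -α ∉ Φp)) {ω α β : V} (hω : ω ∈ Φ)
    (hωdom : IsDominant Φp ω) (hα : α ∈ Φ) (hβ : β ∈ Φ) (hαβ : 0 ≤ ⟪α, β⟫)
    (hdom : IsDominant Φp (α + β)) (hωα : ⟪ω, α⟫ = 1) (hωβ : ⟪ω, β⟫ ≤ 1) :
    α + β - ω ∈ Φp := by
  have hα' : ⟪α + β, α⟫ = 2 + ⟪α, β⟫ := by rw [inner_add_left, hlen α hα, real_inner_comm]
  have hβ' : ⟪α + β, β⟫ = ⟪α, β⟫ + 2 := by rw [inner_add_left, hlen β hβ]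
  have hω' : ⟪α + β, ω⟫ = ⟪ω, α⟫ + ⟪ω, β⟫ := by
    rw [inner_add_left, real_inner_comm ω α, real_inner_comm ω β]
  have h := inner_le_inner_highest_mul hneg hrefl hsplit hω (hlen ω hω) hωdom hdom hα
    (by rw [hωα]; norm_num)
  rw [hα', hω', hωα] at h
  have hωβ1 : ⟪ω, β⟫ = 1 := by linarith
  have hαβ0 : ⟪α, β⟫ = 0 := by linarith
  have hωβ_root : ω - β ∈ Φ := by
    simpa using hneg _ (sub_mem_of_inner_eq_one hrefl hω hβ (by rwa [real_inner_comm]))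
  have hψ : α - (ω - β) ∈ Φ := sub_mem_of_inner_eq_one hrefl hωβ_root hα
    (by rw [inner_sub_right, real_inner_comm ω α, hωα, hαβ0, sub_zero])
  rw [show α - (ω - β) = α + β - ω by abel] at hψ
  refine mem_of_isDominant_of_inner_pos hsplit hdom hψ ?_
  rw [inner_sub_right, inner_add_right, hα', hβ', hω']
  linarith

end SimplyLaced

theorem dominant_sum_eq_highest_add_positive_general (V : Type*) [NormedAddCommGroup V]
    [InnerProductSpace ℝ V]
    (Φ : Finset V)
    (hlen : ∀ α ∈ Φ, ⟪α, α⟫ = 2)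
    (hneg : ∀ α ∈ Φ, -α ∈ Φ)
    (hint : ∀ α ∈ Φ, ∀ β ∈ Φ, ∃ n : ℤ, ⟪α, β⟫ = n)
    (hrefl : ∀ α ∈ Φ, ∀ β ∈ Φ, β - ⟪β, α⟫ • α ∈ Φ)
    (hirr : ∀ S ⊆ Φ, (∀ a ∈ S, ∀ b ∈ Φ, b ∉ S → ⟪a, b⟫ = 0) → S = ∅ ∨ S = Φ)
    -- `Φp` is a positive system for `Φ`
    (Φp : Finset V)
    (hsplit : ∀ α ∈ Φ, (α ∈ Φp ↔ -α ∉ Φp))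
    -- `ω` is the highest root: the (unique) dominant root
    (ω : V) (hω : ω ∈ Φ) (hωdom : ∀ α ∈ Φp, 0 ≤ ⟪ω, α⟫)
    (lam : V)
    (hdom : ∀ α ∈ Φp, 0 ≤ ⟪lam, α⟫)
    (hlam : ∃ α ∈ Φ, ∃ β ∈ Φ, 0 ≤ ⟪α, β⟫ ∧ lam = α + β) :
    ∃ ψ ∈ Φp, lam = ω + ψ := by
  obtain ⟨α, hα, β, hβ, hαβ, rfl⟩ := hlam
  have hlamα : ⟪α + β, α⟫ = 2 + ⟪α, β⟫ := by
    rw [inner_add_left, hlen α hα, real_inner_comm]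
  have hlamβ : ⟪α + β, β⟫ = ⟪α, β⟫ + 2 := by rw [inner_add_left, hlen β hβ]
  have hαp := mem_of_isDominant_of_inner_pos hsplit hdom hα (by linarith)
  have hβp := mem_of_isDominant_of_inner_pos hsplit hdom hβ (by linarith)
  by_cases hαω : ω = α
  · exact ⟨β, hβp, by rw [hαω]⟩
  by_cases hβω : ω = β
  · exact ⟨α, hαp, by rw [hβω, add_comm]⟩
  have hlamω : 0 < ⟪ω, α⟫ + ⟪ω, β⟫ := by
    have := inner_highest_pos hlen hneg hrefl hirr hsplit hω hωdom hdom hα (by linarith)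
    rwa [inner_add_left, real_inner_comm ω α, real_inner_comm ω β] at this
  have hωβ := inner_eq_zero_or_eq_one_of_ne hlen hint hω hβ (hωdom β hβp) hβω
  obtain hωα | hωα := inner_eq_zero_or_eq_one_of_ne hlen hint hω hα (hωdom α hαp) hαω
  · have hωβ : ⟪ω, β⟫ = 1 := by rcases hωβ with h | h <;> linarith
    refine ⟨β + α - ω, ?_, by abel⟩
    exact add_sub_highest_mem_of_inner_eq_one hlen hneg hrefl hsplit hω hωdom hβ hα
      (by rwa [real_inner_comm]) (by rwa [add_comm]) hωβ (by linarith)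
  · refine ⟨α + β - ω, ?_, by abel⟩
    exact add_sub_highest_mem_of_inner_eq_one hlen hneg hrefl hsplit hω hωdom hα hβ hαβ hdom hωα
      (by rcases hωβ with h | h <;> linarith)

/-- In an irreducible simply laced root system with positive system `Φ⁺` and
highest root `ω`, every dominant weight `λ` which is a sum of two roots with
non-negative inner product can be written as `λ = ω + ψ` for some positive
root `ψ`. -/
theorem dominant_sum_eq_highest_add_positive (V : Type*) [NormedAddCommGroup V]
    [InnerProductSpace ℝ V] [FiniteDimensional ℝ V]
    (Φ : Finset V)
    (h0 : (0 : V) ∉ Φ)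
    (hlen : ∀ α ∈ Φ, ⟪α, α⟫ = 2)
    (hneg : ∀ α ∈ Φ, -α ∈ Φ)
    (hred : ∀ α ∈ Φ, ∀ t : ℝ, t • α ∈ Φ → t = 1 ∨ t = -1)
    (hint : ∀ α ∈ Φ, ∀ β ∈ Φ, ∃ n : ℤ, ⟪α, β⟫ = n)
    (hrefl : ∀ α ∈ Φ, ∀ β ∈ Φ, β - ⟪β, α⟫ • α ∈ Φ)
    (hirr : ∀ S ⊆ Φ, (∀ a ∈ S, ∀ b ∈ Φ, b ∉ S → ⟪a, b⟫ = 0) → S = ∅ ∨ S = Φ)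
    -- `Φp` is a positive system for `Φ`
    (Φp : Finset V) (hsub : Φp ⊆ Φ)
    (hsplit : ∀ α ∈ Φ, (α ∈ Φp ↔ -α ∉ Φp))
    (hclosed : ∀ α ∈ Φp, ∀ β ∈ Φp, α + β ∈ Φ → α + β ∈ Φp)
    -- `ω` is the highest root: the (unique) dominant root
    (ω : V) (hω : ω ∈ Φ) (hωdom : ∀ α ∈ Φp, 0 ≤ ⟪ω, α⟫)
    (lam : V)
    (hdom : ∀ α ∈ Φp, 0 ≤ ⟪lam, α⟫)
    (hlam : ∃ α ∈ Φ, ∃ β ∈ Φ, 0 ≤ ⟪α, β⟫ ∧ lam = α + β) :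
    ∃ ψ ∈ Φp, lam = ω + ψ :=
  dominant_sum_eq_highest_add_positive_general V Φ hlen hneg hint hrefl hirr Φp hsplit ω hω hωdom
    lam hdom hlam
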